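/- Let T be the formal power series over ℚ given by T = Σ_{n≥1} n^{n−1} X^n / n! (the tree function). Then X · T′ · (1 − T) = T in ℚ⟦X⟧, where T′ denotes the formal derivative of T; equivalently, X T′ = T/(1 − T). -/

import Mathlib

/-!
Write `T = X S`, `T' = A` and `1 + X T' = B`, where `S = Σ (n+1)ⁿ Xⁿ / (n+1)!`,
`A = Σ (n+1)ⁿ Xⁿ / n!` and `B = Σ nⁿ Xⁿ / n!`. Then `X T' (1 - T) = T` follows from `S B = A`,
whose coefficients form the Abel-type identity `Σ_{i+j=m} C(m+1,i+1) (i+1)^i j^j = (m+1)^(m+1)`.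
This is the value at `y = 0` of `Σ_{i+j=m} C(m+1,i+1) (i+1)^i (y+j)^j = (m+1) (y+m+1)^m`, proved
by induction on `m`: for `m + 1` both sides have the same derivative in `y` by the induction
hypothesis, and both vanish at `y = -(m+2)`, the left side because it becomes, up to sign, the
`(m+2)`-nd forward difference of `x ↦ x^(m+1)`.
-/

open Finset Nat PowerSeries

lemma sum_antidiagonal_neg_one_pow_mul_choose_mul_pow {R : Type*} [CommRing R] (m : ℕ) :
    ∑ p ∈ antidiagonal (m + 1),
      ((-1) ^ p.2 * (m + 2).choose (p.1 + 1) * ((p.1 : R) + 1) ^ (m + 1)) = 0 := by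
  have h := congr_fun (fwdDiff_iter_pow_eq_zero_of_lt (R := R) (Nat.lt_succ_self (m + 1))) 0
  rw [fwdDiff_iter_eq_sum_shift, sum_range_succ', Pi.zero_apply] at h
  rw [Nat.sum_antidiagonal_eq_sum_range_succ_mk, ← h]
  simp only [zero_smul, add_zero, zero_pow (Nat.succ_ne_zero m), smul_zero, zero_add,
    nsmul_eq_mul, mul_one, zsmul_eq_mul]
  refine sum_congr rfl fun k _ => ?_
  rw [Nat.succ_sub_succ]
  push_cast
  ring

namespace Polynomial

variable {R : Type*} [CommRing R]

noncomputable def abelPoly (R : Type*) [CommRing R] (m : ℕ) : R[X] :=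
  ∑ p ∈ antidiagonal m,
    C ((m + 1).choose (p.1 + 1) * (p.1 + 1 : R) ^ p.1) * (X + C (p.2 : R)) ^ p.2

lemma derivative_abelPoly (m : ℕ) :
    derivative (abelPoly R (m + 1)) = C ((m : R) + 2) * (abelPoly R m).comp (X + 1) := by
  rw [abelPoly, abelPoly, derivative_sum, Nat.sum_antidiagonal_succ', sum_comp, mul_sum]
  simp only [derivative_C_mul, derivative_X_add_C_pow, pow_zero, derivative_one, mul_zero,
    zero_add]
  refine sum_congr rfl fun p hp => ?_
  rw [HasAntidiagonal.mem_antidiagonal] at hp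
  have hchoose := Nat.choose_mul_succ_eq (m + 1) (p.1 + 1)
  rw [show m + 1 + 1 - (p.1 + 1) = p.2 + 1 by omega] at hchoose
  have hcoeff := congrArg (Nat.cast : ℕ → R) hchoose
  push_cast at hcoeff
  have hX : X + C ((p.2 + 1 : ℕ) : R) = X + 1 + C (p.2 : R) := by
    simp only [Nat.cast_succ, map_add, map_one]; ring
  simp only [mul_comp, C_comp, pow_comp, add_comp, X_comp, Nat.add_sub_cancel, hX, ← mul_assoc,
    ← C_mul]
  congr 2
  push_cast
  linear_combination -(p.1 + 1 : R) ^ p.1 * hcoeff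

lemma eval_abelPoly_neg (m : ℕ) : (abelPoly R (m + 1)).eval (-((m : R) + 2)) = 0 := by
  rw [abelPoly, eval_finsetSum, ← sum_antidiagonal_neg_one_pow_mul_choose_mul_pow (R := R) m]
  refine sum_congr rfl fun p hp => ?_
  rw [HasAntidiagonal.mem_antidiagonal] at hp
  have hpR : (p.1 : R) + p.2 = m + 1 := by rw [← Nat.cast_add, hp, Nat.cast_succ]
  have hroot : -((m : R) + 2) + p.2 = -(p.1 + 1) := by linear_combination hpR
  have hpow : ((p.1 : R) + 1) ^ p.1 * (p.1 + 1) ^ p.2 = (p.1 + 1) ^ (m + 1) := by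
    rw [← pow_add, hp]
  simp only [eval_mul, eval_C, eval_pow, eval_add, eval_X, hroot, neg_pow (p.1 + 1 : R)]
  linear_combination (-1) ^ p.2 * ((m + 2).choose (p.1 + 1) : R) * hpow

theorem abelPoly_eq [IsAddTorsionFree R] (m : ℕ) :
    abelPoly R m = C ((m : R) + 1) * (X + C ((m : R) + 1)) ^ m := by
  induction m with
  | zero => simp [abelPoly]
  | succ m ih =>
    set q : R[X] := C ((m : R) + 2) * (X + C ((m : R) + 2)) ^ (m + 1)
    have hderiv : derivative (abelPoly R (m + 1) - q) = 0 := by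
      have hX : X + 1 + C ((m : R) + 1) = X + C ((m : R) + 2) := by
        rw [add_assoc, ← map_one C, ← map_add]; ring_nf
      rw [derivative_sub, derivative_abelPoly, ih, sub_eq_zero, derivative_C_mul,
        derivative_X_add_C_pow, mul_comp, C_comp, pow_comp, add_comp, X_comp, C_comp, hX,
        Nat.add_sub_cancel, ← mul_assoc, ← mul_assoc, ← C_mul, ← C_mul]
      push_cast
      ring_nf
    have hroot : (abelPoly R (m + 1) - q).eval (-((m : R) + 2)) = 0 := by
      rw [eval_sub, eval_abelPoly_neg]
      simp [q]
    have hconst := eq_C_of_derivative_eq_zero hderiv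
    rw [hconst, eval_C] at hroot
    rw [hroot, map_zero, sub_eq_zero] at hconst
    rw [hconst, Nat.cast_succ, add_assoc, one_add_one_eq_two]

end Polynomial

theorem sum_antidiagonal_choose_mul_pow_mul_pow {R : Type*} [CommRing R] [IsAddTorsionFree R]
    (m : ℕ) :
    ∑ p ∈ antidiagonal m, ((m + 1).choose (p.1 + 1) * ((p.1 : R) + 1) ^ p.1 * (p.2 : R) ^ p.2) =
      ((m : R) + 1) ^ (m + 1) := by
  have h := congrArg (Polynomial.eval 0) (Polynomial.abelPoly_eq (R := R) m)
  simpa [Polynomial.abelPoly, Polynomial.eval_finsetSum, pow_succ, mul_comm] using h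

section TreeFunction

variable (K : Type*) [Field K] [CharZero K]

noncomputable def treeFun : K⟦X⟧ := mk fun n => if n = 0 then 0 else (n : K) ^ (n - 1) / n !

lemma succ_pow_div_factorial_succ (n k : ℕ) :
    ((n : K) + 1) ^ (k + 1) / (n + 1)! = ((n : K) + 1) ^ k / n ! := by
  rw [factorial_succ]
  push_cast
  field_simp
  ring

lemma treeFun_eq_X_mul : treeFun K = X * mk fun n => ((n : K) + 1) ^ n / (n + 1)! := by
  ext (_ | n)
  · simp [treeFun]
  · simp [treeFun, coeff_succ_X_mul]

lemma derivative_treeFun : d⁄dX K (treeFun K) = mk fun n => ((n : K) + 1) ^ n / n ! := by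
  ext n
  rw [coeff_derivative, treeFun, coeff_mk, coeff_mk, if_neg n.succ_ne_zero, Nat.add_sub_cancel,
    ← succ_pow_div_factorial_succ]
  push_cast
  ring

lemma mk_pow_self_div_factorial :
    (mk fun n => (n : K) ^ n / n !) = 1 + X * mk fun n => ((n : K) + 1) ^ n / n ! := by
  ext (_ | n)
  · simp
  · rw [map_add, coeff_succ_X_mul, coeff_one, if_neg n.succ_ne_zero, zero_add, coeff_mk,
      coeff_mk, ← succ_pow_div_factorial_succ]
    push_cast
    ring

theorem mk_succ_pow_div_mul_mk_pow_self_div :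
    (mk fun n => ((n : K) + 1) ^ n / (n + 1)!) * (mk fun n => (n : K) ^ n / n !) =
      mk fun n => ((n : K) + 1) ^ n / n ! := by
  ext m
  rw [coeff_mul, coeff_mk, ← succ_pow_div_factorial_succ,
    ← sum_antidiagonal_choose_mul_pow_mul_pow, sum_div]
  refine sum_congr rfl fun p hp => ?_
  rw [HasAntidiagonal.mem_antidiagonal] at hp
  have hfact := Nat.choose_mul_factorial_mul_factorial (n := m + 1) (k := p.1 + 1) (by omega)
  rw [show m + 1 - (p.1 + 1) = p.2 by omega] at hfact
  have hchoose : ((m + 1).choose (p.1 + 1) : K) ≠ 0 := by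
    exact_mod_cast (choose_pos (by omega)).ne'
  rw [coeff_mk, coeff_mk, ← hfact]
  push_cast
  field_simp

end TreeFunction

/-- For the tree function `T = Σ_{n≥1} n^{n−1} X^n / n!` in `ℚ⟦X⟧`, we have
`X · T′ · (1 − T) = T`, where `T′` is the formal derivative of `T`. -/
theorem treeFun_deriv (T : PowerSeries ℚ)
    (hT : T = PowerSeries.mk fun n => if n = 0 then 0 else (n : ℚ) ^ (n - 1) / n !) :
    PowerSeries.X * (PowerSeries.derivative ℚ T) * (1 - T) = T := by
  have key := mk_succ_pow_div_mul_mk_pow_self_div ℚ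
  rw [mk_pow_self_div_factorial] at key
  change T = treeFun ℚ at hT
  rw [hT, derivative_treeFun, treeFun_eq_X_mul]
  linear_combination (-X) * key
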